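/- Let G be a graph, p = (v_1, ..., v_r) a shortest path with r odd, and σ = S_{v_1}S_{v_3}⋯S_{v_r}. Then no nontrivial element η of the stabilizer group of |G⟩ with support on v_1 (or on v_r) is a substring of σ, i.e., there is no stabilizer element η ≠ I whose Pauli action agrees with σ's on its support, whose support is a proper subset of supp(σ) containing v_1 but not v_r (or containing v_r but not v_1). -/
import Mathlib


/-- The X-component (symplectic representation) of a single-qubit Pauli label
(`0 = I, 1 = X, 2 = Y, 3 = Z`). -/
def pstrX : Fin 4 → ZMod 2 := ![0, 1, 1, 0]

/-- The Z-component (symplectic representation) of a single-qubit Pauli label. -/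
def pstrZ : Fin 4 → ZMod 2 := ![0, 0, 1, 1]

/-- Recover a Pauli label from its symplectic components. -/
def pauliOfXZ (x z : ZMod 2) : Fin 4 :=
  if x = 1 then (if z = 1 then 2 else 1) else (if z = 1 then 3 else 0)

/-- The Pauli string of the graph-state stabilizer generator
`S_w = X_w ∏_{u ∈ N(w)} Z_u`. -/
def genStr {n : ℕ} (G : SimpleGraph (Fin n)) [DecidableRel G.Adj] (w : Fin n) :
    Fin n → Fin 4 :=
  fun k => if k = w then 1 else if G.Adj w k then 3 else 0

/-- The Pauli string (mod phase) of the stabilizer element `∏_{w ∈ B} S_w` of the graph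
state of `G`: symplectic components add mod 2. -/
def stabStr {n : ℕ} (G : SimpleGraph (Fin n)) [DecidableRel G.Adj]
    (B : Finset (Fin n)) : Fin n → Fin 4 :=
  fun k => pauliOfXZ (∑ w ∈ B, pstrX (genStr G w k)) (∑ w ∈ B, pstrZ (genStr G w k))

lemma pXZ_X (x z : ZMod 2) : pstrX (pauliOfXZ x z) = x := by revert x z; decide

lemma pXZ_zero (x z : ZMod 2) : pauliOfXZ x z = 0 ↔ x = 0 ∧ z = 0 := by revert x z; decide

lemma pXZ_ne : pauliOfXZ 0 1 ≠ pauliOfXZ 0 0 := by decide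

lemma pstrX_genStr {n : ℕ} (G : SimpleGraph (Fin n)) [DecidableRel G.Adj] (w k : Fin n) :
    pstrX (genStr G w k) = if k = w then 1 else 0 := by
  unfold genStr; split_ifs with h1 h2 <;> rfl

lemma pstrZ_genStr {n : ℕ} (G : SimpleGraph (Fin n)) [DecidableRel G.Adj] (w k : Fin n) :
    pstrZ (genStr G w k) = if G.Adj w k then 1 else 0 := by
  unfold genStr
  split_ifs with h1 h2 h3
  · exact absurd (h1 ▸ h2) (G.irrefl)
  · rfl
  · rfl
  · rfl

lemma sumX_eq {n : ℕ} (G : SimpleGraph (Fin n)) [DecidableRel G.Adj] (B : Finset (Fin n))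
    (k : Fin n) : (∑ w ∈ B, pstrX (genStr G w k)) = if k ∈ B then 1 else 0 := by
  simp only [pstrX_genStr]
  exact Finset.sum_ite_eq B k (fun _ => (1 : ZMod 2))

lemma sumZ_eq {n : ℕ} (G : SimpleGraph (Fin n)) [DecidableRel G.Adj] (B : Finset (Fin n))
    (k : Fin n) :
    (∑ w ∈ B, pstrZ (genStr G w k)) = ((B.filter (fun w => G.Adj w k)).card : ZMod 2) := by
  simp only [pstrZ_genStr]
  rw [Finset.sum_boole]

lemma sumX_eq' {n : ℕ} (G : SimpleGraph (Fin n)) [DecidableRel G.Adj] (T : Finset ℕ)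
    (p : ℕ → Fin n) (k : Fin n) :
    (∑ t ∈ T, pstrX (genStr G (p t) k)) = ((T.filter (fun t => k = p t)).card : ZMod 2) := by
  simp only [pstrX_genStr]
  rw [Finset.sum_boole]

lemma sumZ_eq' {n : ℕ} (G : SimpleGraph (Fin n)) [DecidableRel G.Adj] (T : Finset ℕ)
    (p : ℕ → Fin n) (k : Fin n) :
    (∑ t ∈ T, pstrZ (genStr G (p t) k)) =
      ((T.filter (fun t => G.Adj (p t) k)).card : ZMod 2) := by
  simp only [pstrZ_genStr]
  rw [Finset.sum_boole]

/-- Let `p 0, …, p (r-1)` be a shortest path in `G` with `r` odd, and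
`σ = S_{p 0} · S_{p 2} ⋯ S_{p (r-1)}`. Then no nontrivial stabilizer element
`η = ∏_{w ∈ B} S_w` of the graph state is a substring of `σ` — i.e. agrees with `σ` on
its support, has support a proper subset of `supp σ`, and contains `p 0` but not
`p (r-1)` (or `p (r-1)` but not `p 0`) in its support. -/
theorem stmt13 (n r : ℕ) (G : SimpleGraph (Fin n)) [DecidableRel G.Adj]
    (hr : r % 2 = 1) (hr2 : 1 < r) (p : ℕ → Fin n)
    (hadj : ∀ t, t + 1 < r → G.Adj (p t) (p (t + 1)))
    (hshort : G.dist (p 0) (p (r - 1)) = r - 1) :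
    let σ : Fin n → Fin 4 := fun k =>
      pauliOfXZ
        (∑ t ∈ (Finset.range r).filter (fun t => t % 2 = 0), pstrX (genStr G (p t) k))
        (∑ t ∈ (Finset.range r).filter (fun t => t % 2 = 0), pstrZ (genStr G (p t) k))
    ¬ ∃ B : Finset (Fin n), B.Nonempty ∧
        (∀ k, stabStr G B k ≠ 0 → stabStr G B k = σ k) ∧
        {k | stabStr G B k ≠ 0} ⊂ {k | σ k ≠ 0} ∧
        ((p 0 ∈ {k | stabStr G B k ≠ 0} ∧ p (r - 1) ∉ {k | stabStr G B k ≠ 0}) ∨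
         (p (r - 1) ∈ {k | stabStr G B k ≠ 0} ∧ p 0 ∉ {k | stabStr G B k ≠ 0})) := by
  intro σ
  rintro ⟨B, -, hagree, -, hcase⟩
  -- notation
  set T : Finset ℕ := (Finset.range r).filter (fun t => t % 2 = 0) with hTdef
  have hmemT : ∀ t, t ∈ T ↔ t < r ∧ t % 2 = 0 := by
    intro t; simp [hTdef, Finset.mem_filter, Finset.mem_range]
  have hsig : ∀ k, σ k = pauliOfXZ ((T.filter (fun t => k = p t)).card : ZMod 2)
      ((T.filter (fun t => G.Adj (p t) k)).card : ZMod 2) := by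
    intro k
    show pauliOfXZ _ _ = _
    rw [sumX_eq', sumZ_eq']
  have hstab : ∀ k, stabStr G B k = pauliOfXZ (if k ∈ B then 1 else 0)
      ((B.filter (fun w => G.Adj w k)).card : ZMod 2) := by
    intro k
    show pauliOfXZ _ _ = _
    rw [sumX_eq, sumZ_eq]
  -- path machinery
  have hwalk0 : ∀ d a, a + d < r → ∃ w : G.Walk (p a) (p (a + d)), w.length = d := by
    intro d
    induction d with
    | zero => intro a _; exact ⟨SimpleGraph.Walk.nil, rfl⟩
    | succ d ih =>
      intro a h
      obtain ⟨w, hw⟩ := ih (a + 1) (by omega)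
      exact ⟨SimpleGraph.Walk.cons (hadj a (by omega))
        (w.copy rfl (congrArg p (by omega : a + 1 + d = a + (d + 1)))), by simp [hw]⟩
  have hwalk : ∀ a b, a ≤ b → b < r → ∃ w : G.Walk (p a) (p b), w.length = b - a := by
    intro a b hab hbr
    obtain ⟨w, hw⟩ := hwalk0 (b - a) a (by omega)
    exact ⟨w.copy rfl (congrArg p (by omega)), by simp [hw]⟩
  have hdist : ∀ a b, a ≤ b → b < r → G.dist (p a) (p b) = b - a := by
    intro a b hab hbr
    obtain ⟨w2, hw2⟩ := hwalk a b hab hbr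
    have hle : G.dist (p a) (p b) ≤ b - a := hw2 ▸ SimpleGraph.dist_le w2
    obtain ⟨wm, hwm⟩ := w2.reachable.exists_walk_length_eq_dist
    obtain ⟨w1, hw1⟩ := hwalk 0 a (by omega) (by omega)
    obtain ⟨w3, hw3⟩ := hwalk b (r - 1) (by omega) (by omega)
    have := SimpleGraph.dist_le (w1.append (wm.append w3))
    rw [hshort] at this
    simp [SimpleGraph.Walk.length_append, hw1, hwm, hw3] at this
    omega
  have hinj : ∀ a b, a < r → b < r → p a = p b → a = b := by
    intro a b ha hb hpe
    rcases Nat.le_total a b with h | h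
    · have := hdist a b h hb; rw [hpe, SimpleGraph.dist_self] at this; omega
    · have := hdist b a h ha; rw [hpe, SimpleGraph.dist_self] at this; omega
  have hchord : ∀ s t, s < r → t < r → G.Adj (p s) (p t) → t = s + 1 ∨ s = t + 1 := by
    intro s t hs ht hA
    have hne : s ≠ t := fun h => G.irrefl (h ▸ hA)
    have h1 : G.dist (p s) (p t) ≤ 1 :=
      SimpleGraph.dist_le (SimpleGraph.Walk.cons hA SimpleGraph.Walk.nil)
    rcases Nat.le_total s t with h | h
    · have := hdist s t h ht; omega
    · have := hdist t s h hs; rw [SimpleGraph.dist_comm] at this; omega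
  -- members of B are in the support of the stabilizer element
  have hBsupp : ∀ k ∈ B, stabStr G B k ≠ 0 := by
    intro k hk h0
    rw [hstab, pXZ_zero, if_pos hk] at h0
    exact one_ne_zero h0.1
  -- members of B are even-index path vertices
  have hBpath : ∀ k ∈ B, ∃ s, s < r ∧ s % 2 = 0 ∧ k = p s := by
    intro k hk
    have h1 := hagree k (hBsupp k hk)
    have h2 := congrArg pstrX h1
    rw [hstab, hsig, pXZ_X, pXZ_X, if_pos hk] at h2
    by_contra hno
    push_neg at hno
    have hemp : T.filter (fun t => k = p t) = ∅ := by
      ext t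
      simp only [Finset.mem_filter, hmemT, Finset.notMem_empty, iff_false]
      rintro ⟨⟨ht, hte⟩, hkt⟩
      exact hno t ht hte hkt
    rw [hemp] at h2
    simp at h2
  -- σ's X component at even path vertices is 1
  have hsigX : ∀ s, s < r → s % 2 = 0 → (T.filter (fun t => p s = p t)) = {s} := by
    intro s hs hse
    ext t
    simp only [Finset.mem_filter, hmemT, Finset.mem_singleton]
    constructor
    · rintro ⟨⟨ht, -⟩, hpe⟩
      exact (hinj s t hs ht hpe).symm
    · rintro rfl
      exact ⟨⟨hs, hse⟩, rfl⟩
  -- key contradiction at an odd path vertex with exactly one B-neighbor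
  have key : ∀ j, j + 2 < r → j % 2 = 0 →
      (B.filter (fun w => G.Adj w (p (j + 1)))).card = 1 → False := by
    intro j hj2 hje hcard
    have hmB : p (j + 1) ∉ B := by
      intro h
      obtain ⟨s, hs, hse, hps⟩ := hBpath _ h
      have := hinj (j + 1) s (by omega) hs hps
      omega
    have hstabm : stabStr G B (p (j + 1)) ≠ 0 := by
      intro h0
      rw [hstab, pXZ_zero, hcard] at h0
      exact absurd h0.2 (by decide)
    have heq := hagree _ hstabm
    rw [hstab, hsig, if_neg hmB, hcard] at heq
    have hX0 : (T.filter (fun t => p (j + 1) = p t)) = ∅ := by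
      ext t
      simp only [Finset.mem_filter, hmemT, Finset.notMem_empty, iff_false]
      rintro ⟨⟨ht, hte⟩, hpe⟩
      have := hinj (j + 1) t (by omega) ht hpe
      omega
    have hZ2 : (T.filter (fun t => G.Adj (p t) (p (j + 1)))) = {j, j + 2} := by
      ext t
      simp only [Finset.mem_filter, hmemT, Finset.mem_insert, Finset.mem_singleton]
      constructor
      · rintro ⟨⟨ht, hte⟩, hA⟩
        rcases hchord t (j + 1) ht (by omega) hA with h | h
        · left; omega
        · right; omega
      · rintro (h | h)
        · refine ⟨⟨by omega, by omega⟩, ?_⟩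
          rw [h]; exact hadj j (by omega)
        · refine ⟨⟨by omega, by omega⟩, ?_⟩
          rw [h]; exact (hadj (j + 1) (by omega)).symm
    have hcard2 : ({j, j + 2} : Finset ℕ).card = 2 := by
      rw [Finset.card_insert_of_notMem (by simp), Finset.card_singleton]
    have hx : ((Finset.filter (fun t => p (j + 1) = p t) T).card : ZMod 2) = 0 := by
      rw [hX0]; simp
    have hz : ((Finset.filter (fun t => G.Adj (p t) (p (j + 1))) T).card : ZMod 2) = 0 := by
      rw [hZ2, hcard2]; decide
    have ho : ((1 : ℕ) : ZMod 2) = 1 := by decide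
    rw [hx, hz, ho] at heq
    exact pXZ_ne heq
  -- the two symmetric cases
  have hrm1 : r - 1 < r := by omega
  have hrm1e : (r - 1) % 2 = 0 := by omega
  rcases hcase with ⟨h0mem, hlast⟩ | ⟨hlmem, h0not⟩
  · -- p 0 ∈ supp, p (r-1) ∉ supp
    have h0supp : stabStr G B (p 0) ≠ 0 := h0mem
    have h0B : p 0 ∈ B := by
      by_contra h0B
      have h1 := hagree _ h0supp
      have h2 := congrArg pstrX h1
      have hs0 := hsigX 0 (by omega) (by omega)
      rw [hstab, hsig, pXZ_X, pXZ_X, if_neg h0B, hs0] at h2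
      simp at h2
    have hlB : p (r - 1) ∉ B := fun h => hlast (hBsupp _ h)
    have hSne : (T.filter (fun t => p t ∈ B)).Nonempty :=
      ⟨0, Finset.mem_filter.mpr ⟨(hmemT 0).mpr ⟨by omega, by omega⟩, h0B⟩⟩
    set l := (T.filter (fun t => p t ∈ B)).max' hSne with hldef
    have hlS := (T.filter (fun t => p t ∈ B)).max'_mem hSne
    simp only [Finset.mem_filter, hmemT] at hlS
    obtain ⟨⟨hlr, hle⟩, hlB'⟩ := hlS
    have hlne : l ≠ r - 1 := fun h => hlB (h ▸ hlB')
    have hl3 : l + 2 < r := by omega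
    apply key l hl3 hle
    have hfil : B.filter (fun w => G.Adj w (p (l + 1))) = {p l} := by
      ext w
      simp only [Finset.mem_filter, Finset.mem_singleton]
      constructor
      · rintro ⟨hwB, hAw⟩
        obtain ⟨s, hs, hse, rfl⟩ := hBpath w hwB
        rcases hchord s (l + 1) hs (by omega) hAw with h | h
        · -- l + 1 = s + 1, so s = l
          have : s = l := by omega
          rw [this]
        · -- s = l + 2 : contradicts maximality
          exfalso
          have hmem : l + 2 ∈ T.filter (fun t => p t ∈ B) := by
            simp only [Finset.mem_filter, hmemT]
            exact ⟨⟨by omega, by omega⟩, by rw [← h]; exact hwB⟩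
          have := Finset.le_max' _ _ hmem
          omega
      · rintro rfl
        exact ⟨hlB', hadj l (by omega)⟩
    rw [hfil, Finset.card_singleton]
  · -- p (r-1) ∈ supp, p 0 ∉ supp
    have hlsupp : stabStr G B (p (r - 1)) ≠ 0 := hlmem
    have hlB : p (r - 1) ∈ B := by
      by_contra hlB
      have h1 := hagree _ hlsupp
      have h2 := congrArg pstrX h1
      have hsr := hsigX (r - 1) hrm1 hrm1e
      rw [hstab, hsig, pXZ_X, pXZ_X, if_neg hlB, hsr] at h2
      simp at h2
    have h0B : p 0 ∉ B := fun h => h0not (hBsupp _ h)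
    have hSne : (T.filter (fun t => p t ∈ B)).Nonempty :=
      ⟨r - 1, Finset.mem_filter.mpr ⟨(hmemT (r - 1)).mpr ⟨hrm1, hrm1e⟩, hlB⟩⟩
    set l := (T.filter (fun t => p t ∈ B)).min' hSne with hldef
    have hlS := (T.filter (fun t => p t ∈ B)).min'_mem hSne
    simp only [Finset.mem_filter, hmemT] at hlS
    obtain ⟨⟨hlr, hle⟩, hlB'⟩ := hlS
    have hlne : l ≠ 0 := fun h => h0B (h ▸ hlB')
    obtain ⟨j, hj⟩ : ∃ j, l = j + 2 := ⟨l - 2, by omega⟩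
    apply key j (by omega) (by omega)
    have hfil : B.filter (fun w => G.Adj w (p (j + 1))) = {p l} := by
      ext w
      simp only [Finset.mem_filter, Finset.mem_singleton]
      constructor
      · rintro ⟨hwB, hAw⟩
        obtain ⟨s, hs, hse, rfl⟩ := hBpath w hwB
        rcases hchord s (j + 1) hs (by omega) hAw with h | h
        · -- j + 1 = s + 1, so s = j = l - 2 : contradicts minimality
          exfalso
          have hmem : s ∈ T.filter (fun t => p t ∈ B) := by
            simp only [Finset.mem_filter, hmemT]
            exact ⟨⟨hs, hse⟩, hwB⟩
          have := Finset.min'_le _ _ hmem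
          omega
        · -- s = j + 2 = l
          have : s = l := by omega
          rw [this]
      · rintro rfl
        refine ⟨hlB', ?_⟩
        rw [hj]
        exact (hadj (j + 1) (by omega)).symm
    rw [hfil, Finset.card_singleton]
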